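/- Let (W,S) be a Coxeter system with length-preserving automorphism σ, σ(S) = S. If w is σ-straight (i.e., ℓ of the n-th twisted power equals n·ℓ(w) for all n, where the twisted power is w·σ(w)·⋯·σ^{n−1}(w)), then w has minimal length in its σ-conjugacy class. -/

import Mathlib

/-!
If `y = g w σ(g)⁻¹` then `y σ(y) ⋯ σ^{n-1}(y) = g (w σ(w) ⋯ σ^{n-1}(w)) σⁿ(g)⁻¹`, so for
straight `w` we get `n ℓ(w) ≤ n ℓ(y) + 2 ℓ(g)` for every `n`, which forces `ℓ(w) ≤ ℓ(y)`.
-/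

/-- The σ-twisted power `w σ(w) σ²(w) ⋯ σ^{n−1}(w)`. -/
def twPow {W : Type*} [Group W] (σ : MulAut W) (w : W) : ℕ → W
  | 0 => 1
  | n + 1 => twPow σ w n * (σ ^ n) w

section Group

variable {W : Type*} [Group W] (σ : MulAut W)

lemma MulAut.pow_succ_apply (n : ℕ) (x : W) : (σ ^ (n + 1)) x = (σ ^ n) (σ x) := by
  rw [pow_succ]
  rfl

lemma twPow_conj (w g : W) (n : ℕ) :
    twPow σ (g * w * (σ g)⁻¹) n = g * twPow σ w n * ((σ ^ n) g)⁻¹ := by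
  induction n with
  | zero => simp [twPow]
  | succ n ih =>
    simp only [twPow, ih, map_mul, map_inv, MulAut.pow_succ_apply]
    group

end Group

namespace CoxeterSystem

variable {B W : Type*} [Group W] {M : CoxeterMatrix B} (cs : CoxeterSystem M W)
  {σ : MulAut W} (hσℓ : ∀ w : W, cs.length (σ w) = cs.length w)
include hσℓ

lemma length_mulAut_pow_apply (n : ℕ) (v : W) : cs.length ((σ ^ n) v) = cs.length v := by
  induction n generalizing v with
  | zero => rfl
  | succ n ih => rw [MulAut.pow_succ_apply, ih, hσℓ]

lemma length_twPow_le (y : W) (n : ℕ) : cs.length (twPow σ y n) ≤ n * cs.length y := by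
  induction n with
  | zero => simp [twPow]
  | succ n ih =>
    calc cs.length (twPow σ y n * (σ ^ n) y)
        ≤ cs.length (twPow σ y n) + cs.length ((σ ^ n) y) := cs.length_mul_le _ _
      _ ≤ (n + 1) * cs.length y := by
        rw [cs.length_mulAut_pow_apply hσℓ]
        linarith

lemma length_twPow_le_of_conj (w g : W) (n : ℕ) :
    cs.length (twPow σ w n) ≤ n * cs.length (g * w * (σ g)⁻¹) + 2 * cs.length g := by
  have hw : twPow σ w n = g⁻¹ * twPow σ (g * w * (σ g)⁻¹) n * (σ ^ n) g := by
    rw [twPow_conj]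
    group
  have hmul₃ (a b c : W) : cs.length (a * b * c) ≤ cs.length a + cs.length b + cs.length c :=
    (cs.length_mul_le _ _).trans (by grw [cs.length_mul_le a b])
  grw [hw, hmul₃, cs.length_inv, cs.length_mulAut_pow_apply hσℓ,
    cs.length_twPow_le hσℓ]
  omega

end CoxeterSystem

lemma Nat.le_of_forall_mul_le_mul_add {a b c : ℕ} (h : ∀ n : ℕ, n * a ≤ n * b + c) : a ≤ b := by
  by_contra! hba
  have := h (c + 1)
  nlinarith

theorem straight_is_minimal_general {B W : Type*} [Group W] {M : CoxeterMatrix B}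
    (cs : CoxeterSystem M W) (σ : MulAut W)
    (hσℓ : ∀ w : W, cs.length (σ w) = cs.length w)
    (w : W)
    (hstraight : ∀ n : ℕ, cs.length (twPow σ w n) = n * cs.length w) :
    ∀ y : W, (∃ g : W, y = g * w * (σ g)⁻¹) → cs.length w ≤ cs.length y := by
  rintro _ ⟨g, rfl⟩
  refine Nat.le_of_forall_mul_le_mul_add (c := 2 * cs.length g) fun n => ?_
  rw [← hstraight n]
  exact cs.length_twPow_le_of_conj hσℓ w g n

/-- A σ-straight element (`ℓ(w σ(w) ⋯ σ^{n−1}(w)) = n ℓ(w)` for all `n`) has minimal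
length in its σ-conjugacy class, for a length-preserving automorphism `σ` with
`σ(S) = S`. -/
theorem straight_is_minimal {B W : Type*} [Group W] {M : CoxeterMatrix B}
    (cs : CoxeterSystem M W) (σ : MulAut W)
    (hσ : ∀ i : B, ∃ j : B, σ (cs.simple i) = cs.simple j)
    (hσℓ : ∀ w : W, cs.length (σ w) = cs.length w)
    (w : W)
    (hstraight : ∀ n : ℕ, cs.length (twPow σ w n) = n * cs.length w) :
    ∀ y : W, (∃ g : W, y = g * w * (σ g)⁻¹) → cs.length w ≤ cs.length y :=
  straight_is_minimal_general cs σ hσℓ w hstraight
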